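/- arXiv:2008.03159 — 2 statements merged into one kernel-verified Lean document; each statement's English description precedes it below -/
import Mathlib

section
/- Every subgroup of the monoid ID∞ of cofinite partial isometries of ℤ whose identity element is not the identity map of ℤ (i.e., every maximal subgroup other than the group of units) is either trivial or isomorphic to ℤ/2ℤ. -/
/-- A cofinite partial isometry of ℤ with the usual metric. -/
def CofIso (f : ℤ →. ℤ) : Prop :=
  f.Domᶜ.Finite ∧ f.ranᶜ.Finite ∧
  (∀ ⦃x y x' y'⦄, x' ∈ f x → y' ∈ f y → x' = y' → x = y) ∧
  (∀ ⦃x y x' y'⦄, x' ∈ f x → y' ∈ f y → |x' - y'| = |x - y|)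

/-!
The identity `e` of `G` is an idempotent partial injection, hence the identity map of
`D = dom e`, and every `g ∈ G` has domain and range `D`. An isometry of the infinite set
`D ⊆ ℤ` is the restriction of a translation `x ↦ x + c` or a reflection `x ↦ c - x`. Since `g`
maps `D` onto `D`, this map sends the finite nonempty set `ℤ \ D` into itself: a translation
must then be trivial (so `g = e`), and a reflection has its centre determined by `ℤ \ D`.
So `G ⊆ {e, r}` for a single reflection `r`, and the inverse of `r`, not being `e`, is `r`.
-/

open Function Set

namespace PFun

variable {α β γ : Type*}

theorem mem_comp_iff {f : β →. γ} {g : α →. β} {a : α} {c : γ} :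
    c ∈ f.comp g a ↔ ∃ b ∈ g a, c ∈ f b :=
  Part.mem_bind_iff

theorem dom_comp_subset (f : β →. γ) (g : α →. β) : (f.comp g).Dom ⊆ g.Dom :=
  (dom_comp f g).symm ▸ preimage_subset_dom g f.Dom

theorem ran_comp_subset (f : β →. γ) (g : α →. β) : (f.comp g).ran ⊆ f.ran := by
  rintro c ⟨a, hc⟩
  obtain ⟨b, -, hcb⟩ := mem_comp_iff.mp hc
  exact ⟨b, hcb⟩

theorem dom_res (f : α → β) (s : Set α) : (res f s).Dom = s := by
  ext a
  simp [mem_dom, mem_res]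

theorem ran_res (f : α → β) (s : Set α) : (res f s).ran = f '' s := by
  ext b
  simp [ran, mem_res]

theorem eq_res_of_mem_dom {f : α →. β} {φ : α → β} (h : ∀ a ∈ f.Dom, φ a ∈ f a) :
    f = res φ f.Dom := by
  refine ext fun a b => ⟨fun hb => ?_, ?_⟩
  · have ha : a ∈ f.Dom := (mem_dom f a).mpr ⟨b, hb⟩
    exact (mem_res _ _ _ _).mpr ⟨ha, Part.mem_unique (h a ha) hb⟩
  · rintro ⟨ha, rfl⟩
    exact h a ha

theorem eq_res_id_of_comp_self {e : α →. α}
    (hinj : ∀ ⦃x y z⦄, z ∈ e x → z ∈ e y → x = y) (he : e.comp e = e) :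
    e = res id e.Dom := by
  refine eq_res_of_mem_dom fun a ha => ?_
  obtain ⟨b, hb⟩ := (mem_dom e a).mp ha
  obtain ⟨c, hc, hbc⟩ := mem_comp_iff.mp (he.symm ▸ hb : b ∈ e.comp e a)
  obtain rfl : c = b := Part.mem_unique hc hb
  obtain rfl : a = c := hinj hb hbc
  exact hb

theorem dom_eq_of_comp_eq {e g h : α →. α} (hge : g.comp e = g) (hhg : h.comp g = e) :
    g.Dom = e.Dom :=
  (hge ▸ dom_comp_subset g e).antisymm (hhg ▸ dom_comp_subset h g)

theorem ran_eq_of_comp_eq {e g h : α →. α} (heg : e.comp g = g) (hgh : g.comp h = e) :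
    g.ran = e.ran :=
  (heg ▸ ran_comp_subset e g).antisymm (hgh ▸ ran_comp_subset g h)

end PFun

namespace Set.Finite

variable {α : Type*} [AddCommGroup α] [LinearOrder α] [IsOrderedAddMonoid α] {s : Set α}

theorem eq_zero_of_mapsTo_add_right (hs : s.Finite) (hne : s.Nonempty) {c : α}
    (h : MapsTo (· + c) s s) : c = 0 := by
  obtain ⟨M, hM, hMmax⟩ := exists_max_image s id hs hne
  obtain ⟨m, hm, hmmin⟩ := exists_min_image s id hs hne
  have hle : M + c ≤ M := hMmax _ (h hM)
  have hge : m ≤ m + c := hmmin _ (h hm)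
  exact le_antisymm (by simpa using hle) (by simpa using hge)

theorem eq_of_mapsTo_sub_left (hs : s.Finite) (hne : s.Nonempty) {c c' : α}
    (h : MapsTo (c - ·) s s) (h' : MapsTo (c' - ·) s s) : c = c' := by
  have htrans : MapsTo (· + (c' - c)) s s := fun x hx => by
    simpa [sub_sub_eq_add_sub, add_sub_assoc', add_comm] using h' (h hx)
  exact (sub_eq_zero.mp (hs.eq_zero_of_mapsTo_add_right hne htrans)).symm

end Set.Finite

theorem Set.mapsTo_compl_of_image_eq {α : Type*} {f : α → α} {s : Set α} (hf : Injective f)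
    (h : f '' s = s) : MapsTo f sᶜ sᶜ := fun _ hx =>
  h ▸ image_compl_subset hf (mem_image_of_mem f hx)

namespace CofIso

variable {g : ℤ →. ℤ}

theorem exists_eq_res_add_or_sub (hg : CofIso g) :
    ∃ c, g = PFun.res (· + c) g.Dom ∨ g = PFun.res (c - ·) g.Dom := by
  obtain ⟨hfin, -, -, hiso⟩ := hg
  obtain ⟨a, ha, b, hb, hab⟩ := (infinite_of_finite_compl hfin).nontrivial
  obtain ⟨ya, hya⟩ := (PFun.mem_dom g a).mp ha
  obtain ⟨yb, hyb⟩ := (PFun.mem_dom g b).mp hb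
  -- a point of ℤ is determined by its distances to two distinct points
  have hpt : ∀ x ∈ g.Dom, ∃ y ∈ g x, |y - ya| = |x - a| ∧ |y - yb| = |x - b| := fun x hx => by
    obtain ⟨y, hy⟩ := (PFun.mem_dom g x).mp hx
    exact ⟨y, hy, hiso hy hya, hiso hy hyb⟩
  rcases abs_eq_abs.mp (hiso hyb hya) with hsame | hflip
  · refine ⟨ya - a, Or.inl (PFun.eq_res_of_mem_dom fun x hx => ?_)⟩
    obtain ⟨y, hy, h1, h2⟩ := hpt x hx
    convert hy using 1
    rcases abs_eq_abs.mp h1 with h1 | h1 <;> rcases abs_eq_abs.mp h2 with h2 | h2 <;> omega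
  · refine ⟨ya + a, Or.inr (PFun.eq_res_of_mem_dom fun x hx => ?_)⟩
    obtain ⟨y, hy, h1, h2⟩ := hpt x hx
    convert hy using 1
    rcases abs_eq_abs.mp h1 with h1 | h1 <;> rcases abs_eq_abs.mp h2 with h2 | h2 <;> omega

theorem eq_res_id_or_exists_reflection (hg : CofIso g) (hran : g.ran = g.Dom)
    (hne : g.Domᶜ.Nonempty) :
    g = PFun.res id g.Dom ∨ ∃ c, g = PFun.res (c - ·) g.Dom ∧ MapsTo (c - ·) g.Domᶜ g.Domᶜ := by
  have hinvariant {φ : ℤ → ℤ} (hφ : Injective φ) (hres : g = PFun.res φ g.Dom) :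
      MapsTo φ g.Domᶜ g.Domᶜ := by
    refine mapsTo_compl_of_image_eq hφ ?_
    rw [← PFun.ran_res, ← hres, hran]
  obtain ⟨c, hc | hc⟩ := hg.exists_eq_res_add_or_sub
  · obtain rfl : c = 0 :=
      hg.1.eq_zero_of_mapsTo_add_right hne (hinvariant (add_left_injective c) hc)
    rw [show (· + (0 : ℤ)) = id from funext add_zero] at hc
    exact Or.inl hc
  · exact Or.inr ⟨c, hc, hinvariant sub_right_injective hc⟩

end CofIso

theorem stmt_10_general (G : Set (ℤ →. ℤ)) (hG : ∀ g ∈ G, CofIso g)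
    (e : ℤ →. ℤ) (he : e ∈ G)
    (hid : ∀ g ∈ G, e.comp g = g ∧ g.comp e = g)
    (hinv : ∀ g ∈ G, ∃ h ∈ G, h.comp g = e ∧ g.comp h = e)
    (hne : e ≠ PFun.id ℤ) :
    G = {e} ∨ ∃ g ∈ G, g ≠ e ∧ G = {e, g} ∧ g.comp g = e := by
  have he_res : e = PFun.res id e.Dom :=
    PFun.eq_res_id_of_comp_self (fun _ _ _ hx hy => (hG e he).2.2.1 hx hy rfl) (hid e he).1
  have he_ran : e.ran = e.Dom := by
    rw [he_res]
    simp [PFun.ran_res, PFun.dom_res]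
  have hDc : e.Domᶜ.Nonempty := by
    refine nonempty_compl.mpr fun hD => hne ?_
    rw [he_res, hD, PFun.res_univ, PFun.coe_id]
  have hreflection : ∀ g ∈ G, g ≠ e →
      ∃ c, g = PFun.res (c - ·) e.Dom ∧ MapsTo (c - ·) e.Domᶜ e.Domᶜ := by
    intro g hg hge
    obtain ⟨h, -, hhg, hgh⟩ := hinv g hg
    have hdom := PFun.dom_eq_of_comp_eq (hid g hg).2 hhg
    have hran := PFun.ran_eq_of_comp_eq (hid g hg).1 hgh
    rw [he_ran, ← hdom] at hran
    rw [← hdom]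
    refine ((hG g hg).eq_res_id_or_exists_reflection hran (hdom ▸ hDc)).resolve_left ?_
    rwa [hdom, ← he_res]
  have huniq : ∀ g ∈ G, ∀ g' ∈ G, g ≠ e → g' ≠ e → g = g' := by
    intro g hg g' hg' hge hg'e
    obtain ⟨c, rfl, hc⟩ := hreflection g hg hge
    obtain ⟨c', rfl, hc'⟩ := hreflection g' hg' hg'e
    rw [(hG e he).1.eq_of_mapsTo_sub_left hDc hc hc']
  by_cases hG1 : ∀ g ∈ G, g = e
  · exact Or.inl (eq_singleton_iff_unique_mem.mpr ⟨he, hG1⟩)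
  obtain ⟨g, hg, hge⟩ : ∃ g ∈ G, g ≠ e := by simpa using hG1
  refine Or.inr ⟨g, hg, hge, ?_, ?_⟩
  · ext h
    refine ⟨fun hh => ?_, by rintro (rfl | rfl) <;> assumption⟩
    by_cases hhe : h = e
    · exact Or.inl hhe
    · exact Or.inr (huniq h hh g hg hhe hge)
  · obtain ⟨h, hh, hhg, -⟩ := hinv g hg
    have hhe : h ≠ e := by
      rintro rfl
      exact hge ((hid g hg).1.symm.trans hhg)
    rwa [huniq h hh g hg hhe hge] at hhg

/-- Every subgroup of the monoid ID∞ of cofinite partial isometries of ℤ whose identity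
element is not the identity map of ℤ is either trivial or isomorphic to ℤ/2ℤ (i.e. it is
a two-element group {e, g} with g² = e). -/
theorem stmt_10 (G : Set (ℤ →. ℤ)) (hG : ∀ g ∈ G, CofIso g)
    (hmul : ∀ g ∈ G, ∀ h ∈ G, h.comp g ∈ G)
    (e : ℤ →. ℤ) (he : e ∈ G)
    (hid : ∀ g ∈ G, e.comp g = g ∧ g.comp e = g)
    (hinv : ∀ g ∈ G, ∃ h ∈ G, h.comp g = e ∧ g.comp h = e)
    (hne : e ≠ PFun.id ℤ) :
    G = {e} ∨ ∃ g ∈ G, g ≠ e ∧ G = {e, g} ∧ g.comp g = e :=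
  stmt_10_general G hG e he hid hinv hne
end

section
/- The monoid IN∞ of cofinite partial isometries of ℕ contains no minimal generating set: for every generating set A of IN∞ there is a proper subset of A which still generates IN∞. -/
/-!
Every cofinite partial isometry of `ℕ` is a translation `x ↦ x + c` restricted to its cofinite
domain. Hence IN∞ is generated by the shifts `x ↦ x + 1`, `x ↦ x - 1` together with the punctured
identities `puncture n` for any unbounded set of `n`, since conjugating by shifts moves a hole down.

Let `A` generate IN∞; finitely many of its elements already produce the two shifts. In a word over
`A` equal to `puncture n`, the letters read before the hole appears compose with a shift to a shift
again, so the first letter not absorbed this way has a hole at height at least `n` and is conjugate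
to `puncture n` by shifts. Remove from `A` an element `a` with a hole above all holes of those
finitely many elements: the shifts survive, and for every `n` above the holes of `a` the argument
yields `puncture n` as a conjugate of a letter other than `a`.
-/

/-- A cofinite partial isometry of ℕ with the usual metric. -/
def CofIsoN (f : ℕ →. ℕ) : Prop :=
  f.Domᶜ.Finite ∧ f.ranᶜ.Finite ∧
  (∀ ⦃x y x' y'⦄, x' ∈ f x → y' ∈ f y → x' = y' → x = y) ∧
  (∀ ⦃x y x' y'⦄, x' ∈ f x → y' ∈ f y → |(x' : ℤ) - (y' : ℤ)| = |(x : ℤ) - (y : ℤ)|)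

/-- Membership in the submonoid generated by a set A of partial maps of ℕ. -/
inductive Gen (A : Set (ℕ →. ℕ)) : (ℕ →. ℕ) → Prop
  | one : Gen A (PFun.id ℕ)
  | mem {f} : f ∈ A → Gen A f
  | mul {f g} : Gen A f → Gen A g → Gen A (g.comp f)

open Set

theorem PFun.mem_comp_iff_s19 {α β γ : Type*} {g : β →. γ} {f : α →. β} {x : α} {y : γ} :
    y ∈ g.comp f x ↔ ∃ z ∈ f x, y ∈ g z :=
  Part.mem_bind_iff

def shiftUp (j : ℕ) : ℕ →. ℕ := PFun.lift (· + j)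

def shiftDown (j : ℕ) : ℕ →. ℕ := PFun.res (· - j) (Ici j)

def partialId (D : Set ℕ) : ℕ →. ℕ := PFun.res id D

def puncture (n : ℕ) : ℕ →. ℕ := partialId {n}ᶜ

@[simp] theorem mem_shiftUp {j x y : ℕ} : y ∈ shiftUp j x ↔ y = x + j := by
  simp [shiftUp]

@[simp] theorem mem_shiftDown {j x y : ℕ} : y ∈ shiftDown j x ↔ j ≤ x ∧ y = x - j := by
  simp [shiftDown, PFun.mem_res, eq_comm]

@[simp] theorem mem_partialId {D : Set ℕ} {x y : ℕ} : y ∈ partialId D x ↔ x ∈ D ∧ y = x := by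
  simp [partialId, PFun.mem_res, eq_comm]

@[simp] theorem mem_puncture {n x y : ℕ} : y ∈ puncture n x ↔ x ≠ n ∧ y = x := by
  simp [puncture]

theorem shiftUp_zero : shiftUp 0 = PFun.id ℕ :=
  PFun.ext fun x y => by simp [shiftUp]

theorem shiftUp_add (i j : ℕ) : shiftUp (i + j) = (shiftUp i).comp (shiftUp j) :=
  PFun.ext fun x y => by simp [PFun.mem_comp_iff_s19, -PFun.comp_apply]; omega

theorem shiftDown_zero : shiftDown 0 = PFun.id ℕ :=
  PFun.ext fun x y => by simp [eq_comm]

theorem shiftDown_add (i j : ℕ) : shiftDown (i + j) = (shiftDown i).comp (shiftDown j) :=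
  PFun.ext fun x y => by simp [PFun.mem_comp_iff_s19, -PFun.comp_apply]; omega

theorem shiftDown_comp_shiftUp (j : ℕ) : (shiftDown j).comp (shiftUp j) = PFun.id ℕ :=
  PFun.ext fun x y => by simp [PFun.mem_comp_iff_s19, -PFun.comp_apply, eq_comm]

theorem partialId_univ : partialId univ = PFun.id ℕ :=
  PFun.ext fun x y => by simp [eq_comm]

theorem partialId_comp_partialId (D E : Set ℕ) :
    (partialId D).comp (partialId E) = partialId (D ∩ E) :=
  PFun.ext fun x y => by simp [PFun.mem_comp_iff_s19, -PFun.comp_apply]; grind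

theorem puncture_eq_conj (n j : ℕ) :
    puncture n = (shiftDown j).comp ((puncture (n + j)).comp (shiftUp j)) :=
  PFun.ext fun x y => by simp [PFun.mem_comp_iff_s19, -PFun.comp_apply]

theorem cofIsoN_shiftUp (j : ℕ) : CofIsoN (shiftUp j) := by
  refine ⟨by simp [shiftUp], (finite_Iio j).subset fun y hy => ?_, ?_, ?_⟩
  · by_contra hjy
    exact hy ⟨y - j, by simp at hjy ⊢; omega⟩
  · simp +contextual
  · simp +contextual

theorem cofIsoN_shiftDown (j : ℕ) : CofIsoN (shiftDown j) := by
  refine ⟨(finite_Iio j).subset fun x hx => ?_, ?_, ?_, ?_⟩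
  · simpa [PFun.mem_dom] using hx
  · convert finite_empty
    ext y
    simpa [PFun.ran] using ⟨y + j, by omega, by omega⟩
  · intro x y x' y' hx hy; simp at hx hy; omega
  · intro x y x' y' hx hy
    obtain ⟨hjx, rfl⟩ := mem_shiftDown.1 hx
    obtain ⟨hjy, rfl⟩ := mem_shiftDown.1 hy
    rw [Nat.cast_sub hjx, Nat.cast_sub hjy, sub_sub_sub_cancel_right]

theorem cofIsoN_puncture (n : ℕ) : CofIsoN (puncture n) := by
  refine ⟨(finite_singleton n).subset fun x hx => ?_,
    (finite_singleton n).subset fun y hy => ?_, ?_, ?_⟩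
  · simpa [PFun.mem_dom] using hx
  · by_contra hyn
    exact hy ⟨y, by simpa using hyn⟩
  · simp +contextual
  · simp +contextual

def HasOffset (f : ℕ →. ℕ) (c : ℤ) : Prop :=
  ∀ ⦃x y : ℕ⦄, y ∈ f x → (y : ℤ) = x + c

theorem hasOffset_shiftUp (j : ℕ) : HasOffset (shiftUp j) j := by
  intro x y h
  rw [mem_shiftUp.1 h, Nat.cast_add]

theorem HasOffset.comp {f g : ℕ →. ℕ} {c d : ℤ} (hf : HasOffset f c) (hg : HasOffset g d) :
    HasOffset (g.comp f) (c + d) := by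
  intro x y h
  obtain ⟨z, hz, hy⟩ := PFun.mem_comp_iff_s19.1 h
  rw [hg hy, hf hz, add_assoc]

theorem HasOffset.eq_shiftUp_comp {f : ℕ →. ℕ} {t : ℕ} (hf : HasOffset f t) :
    f = (shiftUp t).comp (partialId f.Dom) := by
  refine PFun.ext fun x y => ⟨fun hy => ?_, fun h => ?_⟩
  · have := hf hy
    exact PFun.mem_comp_iff_s19.2
      ⟨x, mem_partialId.2 ⟨(PFun.mem_dom f x).2 ⟨y, hy⟩, rfl⟩, mem_shiftUp.2 (by omega)⟩
  · obtain ⟨z, hz, hy⟩ := PFun.mem_comp_iff_s19.1 h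
    obtain ⟨hzD, rfl⟩ := mem_partialId.1 hz
    obtain ⟨y', hy'⟩ := (PFun.mem_dom f z).1 hzD
    have := hf hy'
    rwa [mem_shiftUp.1 hy, show z + t = y' by omega]

theorem HasOffset.eq_shiftDown_comp {f : ℕ →. ℕ} {t : ℕ} (hf : HasOffset f (-t)) :
    f = (shiftDown t).comp (partialId f.Dom) := by
  refine PFun.ext fun x y => ⟨fun hy => ?_, fun h => ?_⟩
  · have := hf hy
    exact PFun.mem_comp_iff_s19.2
      ⟨x, mem_partialId.2 ⟨(PFun.mem_dom f x).2 ⟨y, hy⟩, rfl⟩, mem_shiftDown.2 ⟨by omega, by omega⟩⟩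
  · obtain ⟨z, hz, hy⟩ := PFun.mem_comp_iff_s19.1 h
    obtain ⟨hzD, rfl⟩ := mem_partialId.1 hz
    obtain ⟨y', hy'⟩ := (PFun.mem_dom f z).1 hzD
    have := hf hy'
    rwa [(mem_shiftDown.1 hy).2, show z - t = y' by omega]

theorem CofIsoN.exists_hasOffset {f : ℕ →. ℕ} (hf : CofIsoN f) : ∃ c, HasOffset f c := by
  obtain ⟨hdom, -, -, hiso⟩ := hf
  have hinf : f.Dom.Infinite := by simpa using hdom.infinite_compl
  have offset_eq_of_far {x y z w : ℕ} (hy : y ∈ f x) (hw : w ∈ f z) (hlt : x + y < z) :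
      (w : ℤ) - z = y - x := by
    -- `|w - y| = z - x`, and `w - y = x - z` would make `w` negative.
    have := hiso hw hy
    rw [abs_of_pos (by omega : (0 : ℤ) < z - x)] at this
    rcases abs_cases ((w : ℤ) - y) with ⟨h, -⟩ | ⟨h, -⟩ <;> omega
  simp only [PFun.dom_eq] at hinf
  obtain ⟨x₀, y₀, hy₀⟩ := hinf.nonempty
  refine ⟨y₀ - x₀, fun x y hy => ?_⟩
  obtain ⟨z, ⟨w, hw⟩, hz⟩ := infinite_iff_exists_gt.1 hinf (max (x + y) (x₀ + y₀))
  have := offset_eq_of_far hy hw (by omega)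
  have := offset_eq_of_far hy₀ hw (by omega)
  omega

theorem HasOffset.eq_shiftUp_or_puncture_eq {p : ℕ →. ℕ} {c : ℤ} (hp : HasOffset p c) {n : ℕ}
    (hn : 0 < n) (hdom : {n}ᶜ ⊆ p.Dom) :
    (∃ s, p = shiftUp s) ∨ n ∉ p.Dom ∧ ∃ t, puncture n = (shiftDown t).comp p := by
  obtain ⟨y, hy⟩ := (PFun.mem_dom p 0).1 (hdom (show 0 ≠ n by omega))
  lift c to ℕ using (by have := hp hy; omega) with t
  have hp' := hp.eq_shiftUp_comp
  by_cases hnp : n ∈ p.Dom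
  · have hD : p.Dom = univ := eq_univ_of_forall fun x => by
      by_cases hx : x = n
      exacts [hx ▸ hnp, hdom hx]
    exact Or.inl ⟨t, by rw [hp', hD, partialId_univ, PFun.comp_id]⟩
  · have hD : p.Dom = {n}ᶜ := Subset.antisymm (fun x hx hxn => hnp (by rwa [← hxn])) hdom
    refine Or.inr ⟨hnp, t, ?_⟩
    rw [hp', hD, ← PFun.comp_assoc, shiftDown_comp_shiftUp, PFun.id_comp, puncture]

namespace Gen

variable {A B : Set (ℕ →. ℕ)}

theorem mono (hAB : A ⊆ B) {f : ℕ →. ℕ} (h : Gen A f) : Gen B f := by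
  induction h with
  | one => exact one
  | mem hf => exact mem (hAB hf)
  | mul _ _ ihf ihg => exact mul ihf ihg

theorem exists_finite_subset {f : ℕ →. ℕ} (h : Gen A f) : ∃ C ⊆ A, C.Finite ∧ Gen C f := by
  induction h with
  | one => exact ⟨∅, empty_subset A, finite_empty, one⟩
  | @mem f hf => exact ⟨{f}, singleton_subset_iff.2 hf, finite_singleton f, mem rfl⟩
  | mul _ _ ihf ihg =>
    obtain ⟨C, hCA, hC, hf⟩ := ihf
    obtain ⟨D, hDA, hD, hg⟩ := ihg
    exact ⟨C ∪ D, union_subset hCA hDA, hC.union hD,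
      mul (hf.mono subset_union_left) (hg.mono subset_union_right)⟩

theorem shiftUp_of_one (h : Gen A (shiftUp 1)) (j : ℕ) : Gen A (shiftUp j) := by
  induction j with
  | zero => rw [shiftUp_zero]; exact one
  | succ j ih => rw [shiftUp_add]; exact mul h ih

theorem shiftDown_of_one (h : Gen A (shiftDown 1)) (j : ℕ) : Gen A (shiftDown j) := by
  induction j with
  | zero => rw [shiftDown_zero]; exact one
  | succ j ih => rw [shiftDown_add]; exact mul h ih

theorem puncture_of_frequently (hT : Gen A (shiftUp 1)) (hS : Gen A (shiftDown 1))
    (hP : ∀ m, ∃ n, m ≤ n ∧ Gen A (puncture n)) (k : ℕ) : Gen A (puncture k) := by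
  obtain ⟨n, hkn, hn⟩ := hP k
  obtain ⟨j, rfl⟩ := Nat.exists_eq_add_of_le hkn
  rw [puncture_eq_conj k j]
  exact mul (mul (shiftUp_of_one hT j) hn) (shiftDown_of_one hS j)

theorem partialId_of_puncture (hP : ∀ n, Gen A (puncture n)) {D : Set ℕ} (hD : Dᶜ.Finite) :
    Gen A (partialId D) := by
  suffices ∀ E : Set ℕ, E.Finite → Gen A (partialId Eᶜ) by simpa using this _ hD
  intro E hE
  induction E, hE using Set.Finite.induction_on with
  | empty => rw [compl_empty, partialId_univ]; exact one
  | @insert n E _ _ ih =>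
    rw [insert_eq, compl_union, ← partialId_comp_partialId]
    exact mul ih (hP n)

theorem of_cofIsoN (hT : Gen A (shiftUp 1)) (hS : Gen A (shiftDown 1))
    (hP : ∀ n, Gen A (puncture n)) {f : ℕ →. ℕ} (hf : CofIsoN f) : Gen A f := by
  obtain ⟨c, hc⟩ := hf.exists_hasOffset
  have hD := partialId_of_puncture hP hf.1
  obtain ⟨t, rfl | rfl⟩ := c.eq_nat_or_neg
  · rw [hc.eq_shiftUp_comp]
    exact mul hD (shiftUp_of_one hT t)
  · rw [hc.eq_shiftDown_comp]
    exact mul hD (shiftDown_of_one hS t)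

theorem shiftUp_or_exists_conj_puncture (hA : ∀ g ∈ A, ∃ c, HasOffset g c) {n : ℕ} (hn : 0 < n)
    {f : ℕ →. ℕ} (hf : Gen A f) (s : ℕ) (hdom : {n}ᶜ ⊆ (f.comp (shiftUp s)).Dom) :
    (∃ s', f.comp (shiftUp s) = shiftUp s') ∨
      ∃ b ∈ A, ∃ s t, n + s ∉ b.Dom ∧ puncture n = (shiftDown t).comp (b.comp (shiftUp s)) := by
  induction hf generalizing s with
  | one => exact Or.inl ⟨s, PFun.id_comp _⟩
  | @mem b hb =>
    obtain ⟨c, hc⟩ := hA b hb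
    refine ((hasOffset_shiftUp s).comp hc).eq_shiftUp_or_puncture_eq hn hdom |>.imp_right ?_
    rintro ⟨hns, t, ht⟩
    refine ⟨b, hb, s, t, fun hb => hns ?_, ht⟩
    exact (PFun.mem_dom _ _).2 ⟨_, PFun.mem_comp_iff_s19.2 ⟨n + s, mem_shiftUp.2 rfl, Part.get_mem hb⟩⟩
  | mul _ _ ihf ihg =>
    rw [PFun.comp_assoc] at hdom ⊢
    rcases ihf s (hdom.trans ((PFun.dom_comp _ _).trans_subset (PFun.preimage_subset_dom _ _)))
      with ⟨s', hs'⟩ | h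
    · rw [hs'] at hdom ⊢
      exact ihg s' hdom
    · exact Or.inr h

end Gen

theorem exists_conj_puncture {A : Set (ℕ →. ℕ)} (hA : ∀ g ∈ A, ∃ c, HasOffset g c) {n : ℕ}
    (hn : 0 < n) (h : Gen A (puncture n)) :
    ∃ b ∈ A, ∃ s t, n + s ∉ b.Dom ∧ puncture n = (shiftDown t).comp (b.comp (shiftUp s)) := by
  have hdom : {n}ᶜ ⊆ ((puncture n).comp (shiftUp 0)).Dom := by
    rw [shiftUp_zero, PFun.comp_id]
    exact fun x hx => (PFun.mem_dom _ _).2 ⟨x, mem_puncture.2 ⟨hx, rfl⟩⟩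
  refine (h.shiftUp_or_exists_conj_puncture hA hn 0 hdom).resolve_left ?_
  rintro ⟨s, hs⟩
  have : n + s ∈ shiftUp s n := mem_shiftUp.2 rfl
  rw [← hs, shiftUp_zero, PFun.comp_id, mem_puncture] at this
  exact this.1 rfl

theorem exists_gen_puncture_sdiff_singleton {A : Set (ℕ →. ℕ)}
    (hA : ∀ g ∈ A, ∃ c, HasOffset g c) (hgen : ∀ n, Gen A (puncture n)) {a : ℕ →. ℕ}
    (ha : a.Domᶜ.Finite) (hT : Gen (A \ {a}) (shiftUp 1)) (hS : Gen (A \ {a}) (shiftDown 1))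
    (m : ℕ) : ∃ n, m ≤ n ∧ Gen (A \ {a}) (puncture n) := by
  obtain ⟨N, hN⟩ := ha.bddAbove
  obtain ⟨b, hbA, s, t, hb, hconj⟩ :=
    exists_conj_puncture hA (n := max m N + 1) (by omega) (hgen _)
  have hba : b ≠ a := by
    rintro rfl
    have := hN hb
    omega
  refine ⟨max m N + 1, by omega, ?_⟩
  rw [hconj]
  exact .mul (.mul (.shiftUp_of_one hT s) (.mem ⟨hbA, hba⟩)) (.shiftDown_of_one hS t)

/-- The monoid IN∞ of cofinite partial isometries of ℕ has no minimal generating set: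
every generating set A of IN∞ has a proper subset which still generates IN∞. -/
theorem stmt_19 (A : Set (ℕ →. ℕ)) (hA : A ⊆ {f | CofIsoN f})
    (hgen : ∀ f, CofIsoN f → Gen A f) :
    ∃ B : Set (ℕ →. ℕ), B ⊂ A ∧ ∀ f, CofIsoN f → Gen B f := by
  have hoff : ∀ g ∈ A, ∃ c, HasOffset g c := fun g hg => (hA hg).exists_hasOffset
  have hP : ∀ n, Gen A (puncture n) := fun n => hgen _ (cofIsoN_puncture n)
  obtain ⟨C, hCA, hC, hCT⟩ := (hgen _ (cofIsoN_shiftUp 1)).exists_finite_subset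
  obtain ⟨D, hDA, hD, hDS⟩ := (hgen _ (cofIsoN_shiftDown 1)).exists_finite_subset
  obtain ⟨N, hN⟩ : BddAbove (⋃ g ∈ C ∪ D, g.Domᶜ) :=
    ((hC.union hD).biUnion fun g hg => (hA (union_subset hCA hDA hg)).1).bddAbove
  obtain ⟨a, haA, s, -, ha, -⟩ := exists_conj_puncture hoff (n := N + 1) (by omega) (hP _)
  have haCD : a ∉ C ∪ D := fun h => by
    have := hN (mem_biUnion h ha)
    omega
  have hCD : C ∪ D ⊆ A \ {a} := fun g hg => ⟨union_subset hCA hDA hg, fun hga => haCD (hga ▸ hg)⟩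
  have hT := hCT.mono (subset_union_left.trans hCD)
  have hS := hDS.mono (subset_union_right.trans hCD)
  refine ⟨A \ {a}, sdiff_singleton_ssubset.2 haA, fun f => Gen.of_cofIsoN hT hS ?_⟩
  exact Gen.puncture_of_frequently hT hS
    (exists_gen_puncture_sdiff_singleton hoff hP (hA haA).1 hT hS)
end
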